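/- Let λ = (n-1/2, n-3/2, ..., 3/2, 1/2, 1) ∈ ℝ^{n+1} and ρ_c = (n-1, n-2, ..., 1, 0, 1/2). For i = 1, ..., n-1 define λᵢ^ε = (n-1/2, ..., with the entry n+1/2-i removed and appended at the end, ..., 3/2, 1, ε/2, n+1/2-i); for i = n set λₙ^ε = (n-1/2, ..., 3/2, ε, 1/2); for i = n+1 set λ_{n+1}^ε = (n-1/2, ..., 3/2, ε/2, 1). Then among all these vectors, the vector (λᵢ^ε - ρ_c)^#, obtained by taking absolute values of all coordinates, has every coordinate a non-integer (in fact equal to 1/2) if and only if i = n+1. -/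
import Mathlib


/-- The vectors `λᵢ^ε ∈ ℝ^{n+1}` of Section 5 (written with coordinates in `ℚ`,
indexed from `0`): for `1 ≤ i ≤ n-1`,
`λᵢ^ε = (n-1/2, …, (entry n+1/2-i removed), …, 3/2, 1, ε/2, n+1/2-i)`;
for `i = n`, `λₙ^ε = (n-1/2, …, 3/2, ε, 1/2)`;
for `i = n+1`, `λ_{n+1}^ε = (n-1/2, …, 3/2, ε/2, 1)`. -/
def lamVec (n i : ℕ) (ε : ℚ) : Fin (n + 1) → ℚ := fun j =>
  if 1 ≤ i ∧ i ≤ n - 1 then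
    if (j : ℕ) < i - 1 then (n : ℚ) - 1/2 - (j : ℕ)
    else if (j : ℕ) < n - 2 then (n : ℚ) - 3/2 - (j : ℕ)
    else if (j : ℕ) = n - 2 then 1
    else if (j : ℕ) = n - 1 then ε/2
    else (n : ℚ) + 1/2 - (i : ℚ)
  else if i = n then
    if (j : ℕ) < n - 1 then (n : ℚ) - 1/2 - (j : ℕ)
    else if (j : ℕ) = n - 1 then ε
    else 1/2
  else
    if (j : ℕ) < n - 1 then (n : ℚ) - 1/2 - (j : ℕ)
    else if (j : ℕ) = n - 1 then ε/2
    else 1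

/-- `ρ_c = (n-1, n-2, …, 1, 0, 1/2) ∈ ℝ^{n+1}`. -/
def rhocVec (n : ℕ) : Fin (n + 1) → ℚ := fun j =>
  if (j : ℕ) ≤ n - 1 then (n : ℚ) - 1 - (j : ℕ) else 1/2

lemma key (n : ℕ) (hn : 2 ≤ n) (ε : ℚ) (hε : ε = 1 ∨ ε = -1) (j : Fin (n + 1)) :
    |lamVec n (n + 1) ε j - rhocVec n j| = 1/2 := by
  have hj := j.isLt
  simp only [lamVec, rhocVec]
  rw [if_neg (by omega), if_neg (by omega)]
  by_cases h1 : (j : ℕ) < n - 1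
  · rw [if_pos h1, if_pos (by omega)]
    rw [show (n : ℚ) - 1/2 - (j : ℕ) - ((n : ℚ) - 1 - (j : ℕ)) = 1/2 by ring]
    norm_num
  · by_cases h2 : (j : ℕ) = n - 1
    · rw [if_neg h1, if_pos h2, if_pos (by omega), h2]
      have hc : ((n - 1 : ℕ) : ℚ) = (n : ℚ) - 1 := by
        push_cast [Nat.cast_sub (by omega : 1 ≤ n)]; ring
      rw [hc]
      rcases hε with h | h <;> rw [h] <;> norm_num
    · rw [if_neg h1, if_neg h2, if_neg (by omega)]
      norm_num
/-- Lemma 5.3 (integrality observation for `so(2n,3)`): every coordinate of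
`(λᵢ^ε - ρ_c)^#` is a non-integer iff `i = n+1`, in which case every
coordinate equals `1/2`. -/
theorem stmt_13 (n : ℕ) (hn : 2 ≤ n) (i : ℕ) (hi1 : 1 ≤ i) (hi2 : i ≤ n + 1)
    (ε : ℚ) (hε : ε = 1 ∨ ε = -1) :
    ((∀ j : Fin (n + 1), ¬ ∃ z : ℤ, |lamVec n i ε j - rhocVec n j| = (z : ℚ))
        ↔ i = n + 1) ∧
    (i = n + 1 → ∀ j : Fin (n + 1), |lamVec n i ε j - rhocVec n j| = 1/2) := by
  have hc1 : ((n - 1 : ℕ) : ℚ) = (n : ℚ) - 1 := by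
    push_cast [Nat.cast_sub (by omega : 1 ≤ n)]; ring
  have hc2 : ((n - 2 : ℕ) : ℚ) = (n : ℚ) - 2 := by
    push_cast [Nat.cast_sub (by omega : 2 ≤ n)]; ring
  constructor
  · constructor
    · intro h
      by_contra hne
      rcases Nat.lt_or_ge i n with hlt | hge
      · -- 1 ≤ i ≤ n - 1 : coordinate n-2 gives difference 0
        refine h ⟨n - 2, by omega⟩ ⟨0, ?_⟩
        simp only [lamVec, rhocVec]
        rw [if_pos ⟨hi1, by omega⟩]
        rw [if_neg (by omega), if_neg (by omega), if_pos trivial, if_pos (by omega), hc2]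
        rw [show (1 : ℚ) - ((n : ℚ) - 1 - ((n : ℚ) - 2)) = 0 by ring]
        norm_num
      · -- i = n : coordinate n-1 gives difference ε
        have hie : i = n := by omega
        refine h ⟨n - 1, by omega⟩ ⟨1, ?_⟩
        simp only [lamVec, rhocVec]
        rw [if_neg (by omega), if_pos hie]
        rw [if_neg (by omega), if_pos trivial, if_pos (by omega), hc1]
        rcases hε with he | he <;> rw [he] <;> norm_num
    · intro h j ⟨z, hz⟩
      rw [h, key n hn ε hε j] at hz
      have hz2 : ((2 * z : ℤ) : ℚ) = 1 := by push_cast; linarith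
      have : (2 * z : ℤ) = 1 := by exact_mod_cast hz2
      omega
  · intro h j
    rw [h]
    exact key n hn ε hε j
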